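/- Every homogeneous real polynomial in two variables of even degree that is nonnegative on ℝ² is a sum of two squares of homogeneous polynomials of half the degree. -/

import Mathlib

/-!
Setting the second variable to `1` turns `f` into a univariate polynomial `p` of degree at most
`2d` that is nonnegative on `ℝ`, and `f` is recovered as the degree-`2d` homogenization of `p`.
A nonnegative real polynomial is a product of a nonnegative constant and quadratics
`(X - a)² + b²`: a nonreal root brings its conjugate along, and a real root of a nonnegative
polynomial is a double root. Each factor is a sum of two squares and such sums are closed under
products (Brahmagupta–Fibonacci), so `p = q² + r²`. Leading coefficients of squares cannot
cancel, so `q` and `r` have degree at most `d`, and homogenizing them in degree `d` gives `g`, `h`.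
-/

namespace Polynomial

theorem natDegree_sq_add_sq {R : Type*} [CommRing R] [LinearOrder R] [IsStrictOrderedRing R]
    (q r : R[X]) : (q ^ 2 + r ^ 2).natDegree = 2 * max q.natDegree r.natDegree := by
  wlog h : r.natDegree ≤ q.natDegree generalizing q r
  · rw [add_comm, max_comm]
    exact this r q (by omega)
  rw [max_eq_left h]
  refine le_antisymm (natDegree_add_le_of_degree_le ?_ ?_) ?_
  · exact natDegree_pow_le.trans (by rw [mul_comm])
  · exact natDegree_pow_le.trans (by rw [mul_comm]; omega)
  rcases eq_or_ne q 0 with rfl | hq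
  · simp
  apply le_natDegree_of_ne_zero
  rw [coeff_add, two_mul, sq, sq, coeff_mul_add_eq_of_natDegree_le le_rfl le_rfl,
    coeff_mul_add_eq_of_natDegree_le h h]
  exact (add_pos_of_pos_of_nonneg (mul_self_pos.2 (leadingCoeff_ne_zero.2 hq))
    (mul_self_nonneg _)).ne'

theorem natDegree_sq_X_sub_C_add_C_sq {R : Type*} [CommRing R] [IsDomain R] (a b : R) :
    ((X - C a) ^ 2 + C b ^ 2).natDegree = 2 := by
  rw [← C_pow, natDegree_add_C, natDegree_pow, natDegree_X_sub_C]

theorem sq_X_sub_C_dvd_of_isRoot_of_eval_nonneg {p : ℝ[X]} (hp : ∀ x, 0 ≤ p.eval x) {a : ℝ}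
    (ha : p.IsRoot a) : (X - C a) ^ 2 ∣ p := by
  rcases eq_or_ne p 0 with rfl | hp0
  · exact dvd_zero _
  rw [← le_rootMultiplicity_iff hp0]
  have hmin : IsLocalMin (fun x ↦ p.eval x) a :=
    .of_forall fun x ↦ by simpa [ha.eq_zero] using hp x
  refine (one_lt_rootMultiplicity_iff_isRoot hp0).2 ⟨ha, ?_⟩
  rw [IsRoot, ← Polynomial.deriv]
  exact hmin.deriv_eq_zero

theorem exists_sq_add_C_sq_dvd_of_eval_nonneg {p : ℝ[X]} (hp : ∀ x, 0 ≤ p.eval x)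
    (hdeg : 0 < p.natDegree) : ∃ a b : ℝ, (X - C a) ^ 2 + C b ^ 2 ∣ p := by
  obtain ⟨z, hz⟩ := IsAlgClosed.exists_aeval_eq_zero ℂ p (natDegree_pos_iff_degree_pos.1 hdeg).ne'
  refine ⟨z.re, z.im, ?_⟩
  by_cases him : z.im = 0
  · have hroot : p.IsRoot z.re := by
      rw [← Complex.re_add_im z, him, Complex.ofReal_zero, zero_mul, add_zero,
        ← Complex.coe_algebraMap, aeval_algebraMap_apply_eq_algebraMap_eval] at hz
      exact (FaithfulSMul.algebraMap_eq_zero_iff ℝ ℂ).1 hz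
    simpa [him] using sq_X_sub_C_dvd_of_isRoot_of_eval_nonneg hp hroot
  · convert quadratic_dvd_of_aeval_eq_zero_im_ne_zero p hz him using 1
    rw [Complex.sq_norm, Complex.normSq_apply]
    simp only [map_add, map_mul, map_ofNat]
    ring

theorem eval_nonneg_of_eval_mul_nonneg {m q : ℝ[X]} (hm0 : m ≠ 0) (hm : ∀ x, 0 ≤ m.eval x)
    (h : ∀ x, 0 ≤ (m * q).eval x) (x : ℝ) : 0 ≤ q.eval x := by
  have hdense : Dense {x | m.eval x ≠ 0} :=
    ((finite_setOfPred_isRoot hm0).countable.dense_compl ℝ :)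
  have hclosed : IsClosed {x | 0 ≤ q.eval x} := isClosed_le continuous_const q.continuous
  refine hclosed.closure_subset_iff.2 (fun y hy ↦ ?_) (hdense.closure_eq ▸ Set.mem_univ x)
  have := h y
  rw [eval_mul] at this
  exact nonneg_of_mul_nonneg_right this ((hm y).lt_of_ne (Ne.symm hy))

theorem exists_eq_sq_add_sq_of_eval_nonneg {p : ℝ[X]} (hp : ∀ x, 0 ≤ p.eval x) :
    ∃ q r : ℝ[X], p = q ^ 2 + r ^ 2 := by
  induction hn : p.natDegree using Nat.strong_induction_on generalizing p with
  | _ n ih =>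
  rcases Nat.eq_zero_or_pos n with rfl | hpos
  · have hC := eq_C_of_natDegree_eq_zero hn
    have hc : 0 ≤ p.coeff 0 := by have := hp 0; rwa [hC, eval_C] at this
    exact ⟨C √(p.coeff 0), 0, by rw [← C_pow, Real.sq_sqrt hc, ← hC]; ring⟩
  obtain ⟨a, b, p₁, rfl⟩ := exists_sq_add_C_sq_dvd_of_eval_nonneg hp (hn ▸ hpos)
  have hm0 : (X - C a) ^ 2 + C b ^ 2 ≠ 0 := fun h ↦ by
    simpa [h] using natDegree_sq_X_sub_C_add_C_sq a b
  have hp₁0 : p₁ ≠ 0 := by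
    rintro rfl
    simp only [mul_zero, natDegree_zero] at hn
    omega
  have hm (x : ℝ) : 0 ≤ ((X - C a) ^ 2 + C b ^ 2).eval x := by
    simp only [eval_add, eval_pow, eval_sub, eval_X, eval_C]
    positivity
  have hdeg : p₁.natDegree < n := by
    rw [← hn, natDegree_mul hm0 hp₁0, natDegree_sq_X_sub_C_add_C_sq]; omega
  obtain ⟨q, r, rfl⟩ := ih _ hdeg (eval_nonneg_of_eval_mul_nonneg hm0 hm hp) rfl
  exact ⟨(X - C a) * q - C b * r, (X - C a) * r + C b * q, sq_add_sq_mul_sq_add_sq ..⟩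

end Polynomial

open Polynomial in
theorem MvPolynomial.natDegree_aeval_le_totalDegree {R σ : Type*} [CommSemiring R]
    {g : σ → R[X]} (hg : ∀ i, (g i).natDegree ≤ 1) (f : MvPolynomial σ R) :
    (MvPolynomial.aeval g f).natDegree ≤ f.totalDegree := by
  conv_lhs => rw [f.as_sum]
  rw [map_sum]
  refine natDegree_sum_le_of_forall_le _ _ fun m hm ↦ ?_
  rw [MvPolynomial.aeval_monomial, ← Polynomial.C_eq_algebraMap]
  refine (natDegree_C_mul_le _ _).trans ?_
  refine (natDegree_prod_le _ _).trans ?_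
  refine le_trans ?_ (MvPolynomial.le_totalDegree hm)
  refine Finset.sum_le_sum fun i _ ↦ natDegree_pow_le.trans ?_
  simpa using Nat.mul_le_mul_left (m i) (hg i)

open MvPolynomial

theorem stmt_8 (d : ℕ) (f : MvPolynomial (Fin 2) ℝ)
    (hf : f.IsHomogeneous (2*d))
    (hnn : ∀ a b : ℝ, 0 ≤ eval ![a, b] f) :
    ∃ g h : MvPolynomial (Fin 2) ℝ,
      g.IsHomogeneous d ∧ h.IsHomogeneous d ∧ f = g^2 + h^2 := by
  set p : Polynomial ℝ := aeval ![Polynomial.X, 1] f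
  have hfp : p.homogenize (2 * d) = f := Polynomial.homogenize_eq_of_isHomogeneous hf rfl
  have hp_deg : p.natDegree ≤ 2 * d :=
    (natDegree_aeval_le_totalDegree (by simp [Fin.forall_fin_two]) f).trans
      hf.totalDegree_le
  have hp_nonneg (x : ℝ) : 0 ≤ p.eval x := by
    simpa [← hfp, Polynomial.eval_homogenize hp_deg] using hnn x 1
  obtain ⟨q, r, hqr⟩ := Polynomial.exists_eq_sq_add_sq_of_eval_nonneg hp_nonneg
  have hqr_deg : max q.natDegree r.natDegree ≤ d := by
    have := Polynomial.natDegree_sq_add_sq q r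
    rw [← hqr] at this
    omega
  refine ⟨q.homogenize d, r.homogenize d, q.isHomogeneous_homogenize,
    r.isHomogeneous_homogenize, ?_⟩
  have hq : q.natDegree ≤ d := le_of_max_le_left hqr_deg
  have hr : r.natDegree ≤ d := le_of_max_le_right hqr_deg
  rw [← hfp, hqr, two_mul, Polynomial.homogenize_add, sq q, sq r,
    Polynomial.homogenize_mul _ _ hq hq, Polynomial.homogenize_mul _ _ hr hr, sq, sq]
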